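/- arXiv:2204.07882 — 3 statements merged into one kernel-verified Lean document; each statement's English description precedes it below -/
import Mathlib

section
/- The squared Frobenius distance ‖Σ(σ₁,σ₂,ρ,φ) − S‖²_F equals 2(σ₁⁴ + 2ρ²σ₁²σ₂² + σ₂⁴) − 2(P₁σ₁² + P₂σ₂²) − 4ρσ₁σ₂(R_c cos φ + R_s sin φ) + ‖S‖²_F, where P₁ = S₁₁ + S₂₂, P₂ = S₃₃ + S₄₄, R_c = S₁₃ − S₂₄, and R_s = S₁₄ + S₂₃. -/
open Real Matrix

noncomputable def SigmaMat (σ₁ σ₂ ρ φ : ℝ) : Matrix (Fin 4) (Fin 4) ℝ :=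
  !![σ₁^2, 0, ρ*σ₁*σ₂*Real.cos φ, ρ*σ₁*σ₂*Real.sin φ;
     0, σ₁^2, ρ*σ₁*σ₂*Real.sin φ, -(ρ*σ₁*σ₂*Real.cos φ);
     ρ*σ₁*σ₂*Real.cos φ, ρ*σ₁*σ₂*Real.sin φ, σ₂^2, 0;
     ρ*σ₁*σ₂*Real.sin φ, -(ρ*σ₁*σ₂*Real.cos φ), 0, σ₂^2]

noncomputable def frobSq (A : Matrix (Fin 4) (Fin 4) ℝ) : ℝ :=
  ∑ i, ∑ j, (A i j)^2

/-! The squared distance expands as `‖Σ‖² - 2⟨Σ, S⟩ + ‖S‖²`; the rotation-reflection block makes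
`‖Σ‖²` independent of `φ` (via `sin² + cos² = 1`), and symmetry of `S` pairs the off-diagonal
terms of `⟨Σ, S⟩` into `R_c cos φ + R_s sin φ`. -/

noncomputable def frobInner (A B : Matrix (Fin 4) (Fin 4) ℝ) : ℝ :=
  ∑ i, ∑ j, A i j * B i j

lemma frobSq_sub (A B : Matrix (Fin 4) (Fin 4) ℝ) :
    frobSq (A - B) = frobSq A - 2 * frobInner A B + frobSq B := by
  simp only [frobSq, frobInner, Matrix.sub_apply, sub_sq, Finset.sum_add_distrib,
    Finset.sum_sub_distrib, Finset.mul_sum, mul_assoc]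

lemma frobSq_sigmaMat (σ₁ σ₂ ρ φ : ℝ) :
    frobSq (SigmaMat σ₁ σ₂ ρ φ) = 2*(σ₁^4 + 2*ρ^2*σ₁^2*σ₂^2 + σ₂^4) := by
  simp only [frobSq, SigmaMat, Fin.sum_univ_four, of_apply, cons_val', cons_val, empty_val',
    cons_val_fin_one]
  linear_combination (4*ρ^2*σ₁^2*σ₂^2) * sin_sq_add_cos_sq φ

lemma frobInner_sigmaMat {S : Matrix (Fin 4) (Fin 4) ℝ} (hS : S.IsSymm) (σ₁ σ₂ ρ φ : ℝ) :
    frobInner (SigmaMat σ₁ σ₂ ρ φ) S =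
      (S 0 0 + S 1 1)*σ₁^2 + (S 2 2 + S 3 3)*σ₂^2
      + 2*ρ*σ₁*σ₂*((S 0 2 - S 1 3)*Real.cos φ + (S 0 3 + S 1 2)*Real.sin φ) := by
  simp only [frobInner, SigmaMat, Fin.sum_univ_four, of_apply, cons_val', cons_val, empty_val',
    cons_val_fin_one]
  rw [hS.apply 0 2, hS.apply 0 3, hS.apply 1 2, hS.apply 1 3]
  ring

theorem frobSq_dist (σ₁ σ₂ ρ φ : ℝ) (S : Matrix (Fin 4) (Fin 4) ℝ)
    (hS : S.IsSymm) :
    frobSq (SigmaMat σ₁ σ₂ ρ φ - S) =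
      2*(σ₁^4 + 2*ρ^2*σ₁^2*σ₂^2 + σ₂^4)
      - 2*((S 0 0 + S 1 1)*σ₁^2 + (S 2 2 + S 3 3)*σ₂^2)
      - 4*ρ*σ₁*σ₂*((S 0 2 - S 1 3)*Real.cos φ + (S 0 3 + S 1 2)*Real.sin φ)
      + frobSq S := by
  rw [frobSq_sub, frobSq_sigmaMat, frobInner_sigmaMat hS]
  ring
end

section
/- For fixed P₁, P₂ > 0 and (R_c, R_s) ≠ (0,0) with R_c² + R_s² < P₁P₂, the function g(σ₁,σ₂,ρ,φ) = 2(σ₁⁴ + 2ρ²σ₁²σ₂² + σ₂⁴) − 2(P₁σ₁² + P₂σ₂²) − 4ρσ₁σ₂(R_c cos φ + R_s sin φ) over σ₁ ≥ 0, σ₂ ≥ 0, 0 ≤ ρ ≤ 1, φ ∈ ℝ attains its minimum at σ₁ = √(P₁/2), σ₂ = √(P₂/2), ρ = √((R_c² + R_s²)/(P₁P₂)), and φ satisfying cos φ = R_c/√(R_c²+R_s²), sin φ = R_s/√(R_c²+R_s²), with minimum value −(P₁² + P₂²)/2 − R_c² − R_s². -/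
open Real

noncomputable def gMFN (P₁ P₂ Rc Rs σ₁ σ₂ ρ φ : ℝ) : ℝ :=
  2*(σ₁^4 + 2*ρ^2*σ₁^2*σ₂^2 + σ₂^4) - 2*(P₁*σ₁^2 + P₂*σ₂^2)
    - 4*ρ*σ₁*σ₂*(Rc*Real.cos φ + Rs*Real.sin φ)

theorem gMFN_min (P₁ P₂ Rc Rs : ℝ) (hP₁ : 0 < P₁) (hP₂ : 0 < P₂)
    (hR : 0 < Rc^2 + Rs^2) (hRP : Rc^2 + Rs^2 < P₁*P₂) :
    ∀ φ₀ : ℝ, Real.cos φ₀ = Rc / Real.sqrt (Rc^2 + Rs^2) →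
      Real.sin φ₀ = Rs / Real.sqrt (Rc^2 + Rs^2) →
      (gMFN P₁ P₂ Rc Rs (Real.sqrt (P₁/2)) (Real.sqrt (P₂/2))
          (Real.sqrt ((Rc^2 + Rs^2)/(P₁*P₂))) φ₀
        = -(P₁^2 + P₂^2)/2 - Rc^2 - Rs^2) ∧
      ∀ σ₁ σ₂ ρ φ : ℝ, 0 ≤ σ₁ → 0 ≤ σ₂ → 0 ≤ ρ → ρ ≤ 1 →
        -(P₁^2 + P₂^2)/2 - Rc^2 - Rs^2 ≤ gMFN P₁ P₂ Rc Rs σ₁ σ₂ ρ φ := by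
  intro φ₀ hc hs
  set R : ℝ := Real.sqrt (Rc^2 + Rs^2) with hRdef
  have hRpos : 0 < R := Real.sqrt_pos.mpr hR
  have hRsq : R^2 = Rc^2 + Rs^2 := Real.sq_sqrt hR.le
  constructor
  · have h1 : Real.sqrt (P₁/2) ^ 2 = P₁/2 := Real.sq_sqrt (by positivity)
    have h2 : Real.sqrt (P₂/2) ^ 2 = P₂/2 := Real.sq_sqrt (by positivity)
    have h3 : Real.sqrt ((Rc^2 + Rs^2)/(P₁*P₂)) ^ 2 = (Rc^2 + Rs^2)/(P₁*P₂) :=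
      Real.sq_sqrt (by positivity)
    have hprod : Real.sqrt ((Rc^2 + Rs^2)/(P₁*P₂)) * Real.sqrt (P₁/2) * Real.sqrt (P₂/2)
        = R / 2 := by
      rw [← Real.sqrt_mul (by positivity), ← Real.sqrt_mul (by positivity)]
      rw [show (Rc^2 + Rs^2)/(P₁*P₂) * (P₁/2) * (P₂/2) = (Rc^2 + Rs^2) / 4 by
        field_simp; ring]
      rw [show (Rc^2 + Rs^2)/4 = (R/2)^2 by nlinarith [hRsq]]
      exact Real.sqrt_sq (by positivity)
    have ha : Rc * Real.cos φ₀ + Rs * Real.sin φ₀ = R := by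
      rw [hc, hs]
      field_simp
      linarith [hRsq]
    unfold gMFN
    rw [ha]
    have h4 : Real.sqrt (P₁/2) ^ 4 = (P₁/2)^2 := by
      rw [show (4:ℕ) = 2*2 by norm_num, pow_mul, h1]
    have h5 : Real.sqrt (P₂/2) ^ 4 = (P₂/2)^2 := by
      rw [show (4:ℕ) = 2*2 by norm_num, pow_mul, h2]
    have key : Real.sqrt ((Rc^2 + Rs^2)/(P₁*P₂))^2 * Real.sqrt (P₁/2)^2 * Real.sqrt (P₂/2)^2
        = (Rc^2+Rs^2)/4 := by
      rw [h1, h2, h3]; field_simp; ring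
    linear_combination 2*h4 + 2*h5 + 4*key - 2*P₁*h1 - 2*P₂*h2 - 4*R*hprod - 2*hRsq
  · intro σ₁ σ₂ ρ φ h1 h2 h3 h4
    have ha : Rc * Real.cos φ + Rs * Real.sin φ ≤ R := by
      nlinarith [Real.sq_sqrt hR.le, Real.sqrt_nonneg (Rc^2+Rs^2),
        sq_nonneg (Rc * Real.sin φ - Rs * Real.cos φ), Real.sin_sq_add_cos_sq φ,
        sq_nonneg (Rc * Real.cos φ + Rs * Real.sin φ - R)]
    have ht : 0 ≤ ρ * σ₁ * σ₂ := by positivity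
    unfold gMFN
    nlinarith [sq_nonneg (σ₁^2 - P₁/2), sq_nonneg (σ₂^2 - P₂/2),
      sq_nonneg (2*ρ*σ₁*σ₂ - R), mul_nonneg ht (sub_nonneg.mpr ha), hRsq]
end

section
/- If (X, Y) is a bivariate normal random vector with mean (α cos θ, α sin θ) and covariance matrix β² I₂ (β > 0, α ≥ 0, θ ∈ ℝ), then √(X² + Y²) has the Rice density f(x) = (x/β²) exp(−(x² + α²)/(2β²)) I₀(xα/β²) for x ≥ 0, where I₀ is the modified Bessel function of the first kind of order zero. -/
/-!
Pass to polar coordinates `(x, y) = (r cos t, r sin t)`. The Gaussian density at that point is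
`(2πβ²)⁻¹ exp(-(r² + α²)/(2β²)) exp((rα/β²) cos(t - θ))`, so integrating `r` times it over the
angle gives the Rice density: the shift by `θ` disappears by periodicity, and the remaining
integral of `exp(c cos t)` over a full period is `2π I₀(c)`.
-/

open Real MeasureTheory ProbabilityTheory

noncomputable def besselI0 (z : ℝ) : ℝ :=
  (1/Real.pi) * ∫ t in (0:ℝ)..Real.pi, Real.exp (z * Real.cos t)

open Set
open scoped NNReal ENNReal

theorem intervalIntegral_comp_sub_eq_two_mul_of_periodic_of_even {f : ℝ → ℝ}
    (hf : Continuous f) (hper : f.Periodic (2 * π)) (heven : f.Even) (θ : ℝ) :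
    ∫ t in -π..π, f (t - θ) = 2 * ∫ t in 0..π, f t := by
  have hshift : ∫ t in -π..π, f (t - θ) = ∫ t in -π..π, f t := by
    rw [intervalIntegral.integral_comp_sub_right]
    convert hper.intervalIntegral_add_eq (-π - θ) (-π) using 2 <;> ring
  have hneg : ∫ t in -π..0, f t = ∫ t in 0..π, f t := by
    simpa only [heven _, neg_zero] using
      (intervalIntegral.integral_comp_neg (a := 0) (b := π) f).symm
  rw [hshift, ← intervalIntegral.integral_add_adjacent_intervals (b := 0)
    (hf.intervalIntegrable _ _) (hf.intervalIntegrable _ _), hneg, two_mul]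

theorem intervalIntegral_exp_mul_cos_sub (c θ : ℝ) :
    ∫ t in -π..π, exp (c * cos (t - θ)) = 2 * π * besselI0 c := by
  rw [intervalIntegral_comp_sub_eq_two_mul_of_periodic_of_even (f := fun t => exp (c * cos t))
    (by fun_prop) (fun t => by simp) (fun t => by simp), besselI0]
  field_simp

theorem gaussianReal_prod_gaussianReal {μ₁ μ₂ : ℝ} {v₁ v₂ : ℝ≥0} (hv₁ : v₁ ≠ 0) (hv₂ : v₂ ≠ 0) :
    (gaussianReal μ₁ v₁).prod (gaussianReal μ₂ v₂) =
      volume.withDensity fun p => gaussianPDF μ₁ v₁ p.1 * gaussianPDF μ₂ v₂ p.2 := by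
  rw [gaussianReal_of_var_ne_zero _ hv₁, gaussianReal_of_var_ne_zero _ hv₂,
    prod_withDensity (measurable_gaussianPDF _ _) (measurable_gaussianPDF _ _),
    Measure.volume_eq_prod]

theorem gaussianPDFReal_mul_gaussianPDFReal_polar (α θ r t : ℝ) {v : ℝ≥0} (hv : v ≠ 0) :
    gaussianPDFReal (α * cos θ) v (r * cos t) * gaussianPDFReal (α * sin θ) v (r * sin t) =
      (2 * π * v)⁻¹ * exp (-(r ^ 2 + α ^ 2) / (2 * v)) * exp (r * α / v * cos (t - θ)) := by
  have hexp : -(r * cos t - α * cos θ) ^ 2 / (2 * v) + -(r * sin t - α * sin θ) ^ 2 / (2 * v) =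
      -(r ^ 2 + α ^ 2) / (2 * v) + r * α / v * cos (t - θ) := by
    rw [cos_sub]
    field_simp
    linear_combination (-r ^ 2) * sin_sq_add_cos_sq t + (-α ^ 2) * sin_sq_add_cos_sq θ
  have hnorm : (2 * π * v)⁻¹ = (√(2 * π * v))⁻¹ * (√(2 * π * v))⁻¹ := by
    rw [← mul_inv, mul_self_sqrt (by positivity)]
  rw [gaussianPDFReal, gaussianPDFReal, mul_assoc (2 * π * v)⁻¹, ← exp_add, ← hexp, exp_add,
    hnorm]
  ring

theorem lintegral_gaussianPDF_mul_gaussianPDF_polar (α θ : ℝ) {v : ℝ≥0} (hv : v ≠ 0) {r : ℝ}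
    (hr : 0 ≤ r) :
    ENNReal.ofReal r * ∫⁻ t in Ioo (-π) π,
        gaussianPDF (α * cos θ) v (r * cos t) * gaussianPDF (α * sin θ) v (r * sin t) =
      ENNReal.ofReal (r / v * exp (-(r ^ 2 + α ^ 2) / (2 * v)) * besselI0 (r * α / v)) := by
  simp_rw [gaussianPDF, ← ENNReal.ofReal_mul (gaussianPDFReal_nonneg _ _ _),
    gaussianPDFReal_mul_gaussianPDFReal_polar α θ r _ hv]
  rw [← ofReal_integral_eq_lintegral_ofReal, ← ENNReal.ofReal_mul hr,
    ← integral_Ioc_eq_integral_Ioo, ← intervalIntegral.integral_of_le (by linarith [pi_pos]),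
    intervalIntegral.integral_const_mul, intervalIntegral_exp_mul_cos_sub]
  · congr 1
    field_simp
  · exact (Continuous.integrableOn_Icc (by fun_prop)).mono_set Ioo_subset_Icc_self
  · exact Filter.Eventually.of_forall fun t => by positivity

theorem map_sqrt_sq_add_sq_withDensity {g : ℝ × ℝ → ℝ≥0∞} (hg : Measurable g) :
    (volume.withDensity g).map (fun p : ℝ × ℝ => √(p.1 ^ 2 + p.2 ^ 2)) =
      volume.withDensity ((Ioi 0).indicator fun r =>
        ENNReal.ofReal r * ∫⁻ t in Ioo (-π) π, g (r * cos t, r * sin t)) := by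
  set f : ℝ × ℝ → ℝ := fun p => √(p.1 ^ 2 + p.2 ^ 2)
  have hf : Measurable f := by fun_prop
  have hf_polar : ∀ r t, 0 ≤ r → f (r * cos t, r * sin t) = r := fun r t hr => by
    simp only [f, mul_pow, ← mul_add, cos_sq_add_sin_sq, mul_one, sqrt_sq hr]
  ext s hs
  have hmeas : Measurable fun p : ℝ × ℝ =>
      ENNReal.ofReal p.1 • (f ⁻¹' s).indicator g (polarCoord.symm p) :=
    measurable_fst.ennreal_ofReal.smul
      ((hg.indicator (hf hs)).comp continuous_polarCoord_symm.measurable)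
  rw [Measure.map_apply hf hs, withDensity_apply _ (hf hs), withDensity_apply _ hs,
    ← lintegral_indicator (hf hs), ← lintegral_comp_polarCoord_symm, polarCoord_target,
    Measure.volume_eq_prod, ← Measure.prod_restrict, lintegral_prod _ hmeas.aemeasurable,
    ← lintegral_indicator measurableSet_Ioi, ← lintegral_indicator hs]
  refine lintegral_congr fun r => ?_
  by_cases hr : r ∈ Ioi 0
  · by_cases hrs : r ∈ s
    · simp [indicator_of_mem hr, hf_polar r _ (le_of_lt hr), hrs, lintegral_const_mul']
    · simp [indicator_of_mem hr, hf_polar r _ (le_of_lt hr), hrs]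
  · rw [indicator_of_notMem hr, eq_comm]
    exact indicator_apply_eq_zero.2 fun _ => indicator_of_notMem hr _

theorem rice_from_bivariate_normal_general (α β θ : ℝ) (hβ : 0 < β)
    {Ω : Type*} [MeasureSpace Ω]
    (X Y : Ω → ℝ) (hX : Measurable X) (hY : Measurable Y)
    (hjoint : Measure.map (fun ω => (X ω, Y ω)) ℙ =
      (gaussianReal (α * Real.cos θ) ((β^2).toNNReal)).prod
        (gaussianReal (α * Real.sin θ) ((β^2).toNNReal))) :
    Measure.map (fun ω => Real.sqrt ((X ω)^2 + (Y ω)^2)) ℙ =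
      volume.withDensity (fun x => ENNReal.ofReal
        (if 0 ≤ x then
          x/β^2 * Real.exp (-(x^2 + α^2)/(2*β^2)) * besselI0 (x*α/β^2)
        else 0)) := by
  have hv : (β ^ 2).toNNReal ≠ 0 := by positivity
  have hv_coe : ((β ^ 2).toNNReal : ℝ) = β ^ 2 := Real.coe_toNNReal _ (sq_nonneg β)
  have hnorm : Measurable fun p : ℝ × ℝ => √(p.1 ^ 2 + p.2 ^ 2) := by fun_prop
  rw [show (fun ω => √(X ω ^ 2 + Y ω ^ 2)) =
      (fun p : ℝ × ℝ => √(p.1 ^ 2 + p.2 ^ 2)) ∘ fun ω => (X ω, Y ω) from rfl,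
    ← Measure.map_map hnorm (hX.prodMk hY), hjoint, gaussianReal_prod_gaussianReal hv hv,
    map_sqrt_sq_add_sq_withDensity (by fun_prop)]
  congr 1
  funext x
  by_cases hx : 0 < x
  · rw [indicator_of_mem (mem_Ioi.2 hx),
      lintegral_gaussianPDF_mul_gaussianPDF_polar α θ hv hx.le, hv_coe, if_pos hx.le]
  · rw [indicator_of_notMem (notMem_Ioi.2 (not_lt.1 hx))]
    rcases (not_lt.1 hx).lt_or_eq with hx | rfl
    · rw [if_neg hx.not_ge, ENNReal.ofReal_zero]
    · simp

theorem rice_from_bivariate_normal (α β θ : ℝ) (hα : 0 ≤ α) (hβ : 0 < β)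
    {Ω : Type*} [MeasureSpace Ω] [IsProbabilityMeasure (ℙ : Measure Ω)]
    (X Y : Ω → ℝ) (hX : Measurable X) (hY : Measurable Y)
    (hjoint : Measure.map (fun ω => (X ω, Y ω)) ℙ =
      (gaussianReal (α * Real.cos θ) ((β^2).toNNReal)).prod
        (gaussianReal (α * Real.sin θ) ((β^2).toNNReal))) :
    Measure.map (fun ω => Real.sqrt ((X ω)^2 + (Y ω)^2)) ℙ =
      volume.withDensity (fun x => ENNReal.ofReal
        (if 0 ≤ x then
          x/β^2 * Real.exp (-(x^2 + α^2)/(2*β^2)) * besselI0 (x*α/β^2)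
        else 0)) :=
  rice_from_bivariate_normal_general α β θ hβ X Y hX hY hjoint
end
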